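/- arXiv:2212.00073 — 2 statements merged into one kernel-verified Lean document; each statement's English description precedes it below -/
import Mathlib

section
/- Term formula for the 3n+3^k sequence: for every k ∈ ℕ, every positive integer n and every l ∈ ℕ, let m = #{i : 0 ≤ i < l and g_k^i(n) is odd}, and for each index i < l with g_k^i(n) odd let o_i = #{j : i < j < l and g_k^j(n) is odd} and e_i = #{j : 0 ≤ j < i and g_k^j(n) is even}. Then 2^{l-m} · g_k^l(n) = 3^m · n + 3^k · Σ_{i < l, g_k^i(n) odd} 3^{o_i} · 2^{e_i}. -/
open Finset

/-- The generalized Collatz map `g k` : halve if even, `3n + 3^k` if odd. -/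
def g (k : ℕ) (n : ℕ) : ℕ := if n % 2 = 0 then n / 2 else 3 * n + 3 ^ k

section AffineRecurrence

variable {R : Type*} [CommSemiring R] (p : ℕ → Prop) [DecidablePred p]

lemma filter_Ioo_add_one_right_of_pos {i l : ℕ} (hil : i < l) (hl : p l) :
    {j ∈ Ioo i (l + 1) | p j} = insert l {j ∈ Ioo i l | p j} := by
  rw [Ioo_add_one_right_eq_Ioc, ← Ioo_insert_right hil, filter_insert, if_pos hl]

lemma filter_Ioo_add_one_right_of_neg {i l : ℕ} (hil : i < l) (hl : ¬p l) :
    {j ∈ Ioo i (l + 1) | p j} = {j ∈ Ioo i l | p j} := by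
  rw [Ioo_add_one_right_eq_Ioc, ← Ioo_insert_right hil, filter_insert, if_neg hl]

lemma sum_filter_range_add_one_of_pos (a : R) {l : ℕ} (hl : p l) :
    ∑ i ∈ range (l + 1) with p i, a ^ #{j ∈ Ioo i (l + 1) | p j} * 2 ^ #{j ∈ range i | ¬p j} =
      2 ^ #{j ∈ range l | ¬p j} +
        a * ∑ i ∈ range l with p i, a ^ #{j ∈ Ioo i l | p j} * 2 ^ #{j ∈ range i | ¬p j} := by
  rw [range_add_one, filter_insert, if_pos hl, sum_insert (by simp), Ioo_add_one_right_eq_Ioc, Ioc_self,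
    mul_sum]
  simp only [filter_empty, card_empty, pow_zero, one_mul]
  refine congrArg _ (sum_congr rfl fun i hi => ?_)
  have hil : i < l := mem_range.mp (mem_filter.mp hi).1
  rw [filter_Ioo_add_one_right_of_pos p hil hl, card_insert_of_notMem (by simp), pow_succ]
  ring

lemma sum_filter_range_add_one_of_neg (a : R) {l : ℕ} (hl : ¬p l) :
    ∑ i ∈ range (l + 1) with p i, a ^ #{j ∈ Ioo i (l + 1) | p j} * 2 ^ #{j ∈ range i | ¬p j} =
      ∑ i ∈ range l with p i, a ^ #{j ∈ Ioo i l | p j} * 2 ^ #{j ∈ range i | ¬p j} := by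
  rw [range_add_one, filter_insert, if_neg hl]
  refine sum_congr rfl fun i hi => ?_
  rw [filter_Ioo_add_one_right_of_neg p (mem_range.mp (mem_filter.mp hi).1) hl]

/-- Each affine step `x ↦ a x + c` multiplies the `x₀`-coefficient and the earlier `c`-terms by `a`
and contributes a new `c`-term weighted by the halvings before it. -/
theorem two_pow_mul_eq_of_halve_or_affine {x : ℕ → R} {a c : R}
    (halve : ∀ i, ¬p i → 2 * x (i + 1) = x i) (affine : ∀ i, p i → x (i + 1) = a * x i + c)
    (l : ℕ) :
    2 ^ #{i ∈ range l | ¬p i} * x l =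
      a ^ #{i ∈ range l | p i} * x 0 +
        c * ∑ i ∈ range l with p i, a ^ #{j ∈ Ioo i l | p j} * 2 ^ #{j ∈ range i | ¬p j} := by
  induction l with
  | zero => simp
  | succ l ih =>
    by_cases hl : p l
    · rw [sum_filter_range_add_one_of_pos p a hl, range_add_one, filter_insert, filter_insert,
        if_pos hl, if_neg (not_not.mpr hl), card_insert_of_notMem (by simp), affine l hl, pow_succ]
      calc 2 ^ #{i ∈ range l | ¬p i} * (a * x l + c)
          = a * (2 ^ #{i ∈ range l | ¬p i} * x l) + c * 2 ^ #{i ∈ range l | ¬p i} := by ring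
        _ = _ := by rw [ih]; ring
    · rw [sum_filter_range_add_one_of_neg p a hl, range_add_one, filter_insert, filter_insert,
        if_neg hl, if_pos hl, card_insert_of_notMem (by simp), pow_succ, mul_assoc, halve l hl]
      exact ih

end AffineRecurrence

lemma two_mul_g_of_even {k n : ℕ} (hn : Even n) : 2 * g k n = n := by
  rw [g, if_pos (Nat.even_iff.mp hn), Nat.two_mul_div_two_of_even hn]

lemma g_of_odd {k n : ℕ} (hn : Odd n) : g k n = 3 * n + 3 ^ k := by
  rw [g, if_neg (Nat.odd_iff.mp hn ▸ one_ne_zero)]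

lemma sub_card_filter_odd_eq_card_filter_even (f : ℕ → ℕ) (l : ℕ) :
    l - #{i ∈ range l | Odd (f i)} = #{i ∈ range l | Even (f i)} := by
  have h := card_filter_add_card_filter_not (s := range l) (fun i => Odd (f i))
  simp only [Nat.not_odd_iff_even, card_range] at h
  omega

theorem term_formula_general (k n l : ℕ) :
    2 ^ (l - ((Finset.range l).filter (fun i => Odd ((g k)^[i] n))).card) * (g k)^[l] n =
      3 ^ ((Finset.range l).filter (fun i => Odd ((g k)^[i] n))).card * n +
      3 ^ k * ∑ i ∈ (Finset.range l).filter (fun i => Odd ((g k)^[i] n)),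
        3 ^ ((Finset.Ioo i l).filter (fun j => Odd ((g k)^[j] n))).card *
        2 ^ ((Finset.range i).filter (fun j => Even ((g k)^[j] n))).card := by
  have h := two_pow_mul_eq_of_halve_or_affine (fun i => Odd ((g k)^[i] n))
    (x := fun i => (g k)^[i] n) (a := 3) (c := 3 ^ k)
    (fun i hi => by
      rw [Function.iterate_succ_apply']
      exact two_mul_g_of_even (Nat.not_odd_iff_even.mp hi))
    (fun i hi => by rw [Function.iterate_succ_apply', g_of_odd hi]) l
  simp only [Nat.not_odd_iff_even, Function.iterate_zero_apply] at h
  rwa [sub_card_filter_odd_eq_card_filter_even]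

theorem term_formula (k n l : ℕ) (hn : 0 < n) :
    2 ^ (l - ((Finset.range l).filter (fun i => Odd ((g k)^[i] n))).card) * (g k)^[l] n =
      3 ^ ((Finset.range l).filter (fun i => Odd ((g k)^[i] n))).card * n +
      3 ^ k * ∑ i ∈ (Finset.range l).filter (fun i => Odd ((g k)^[i] n)),
        3 ^ ((Finset.Ioo i l).filter (fun j => Odd ((g k)^[j] n))).card *
        2 ^ ((Finset.range i).filter (fun j => Even ((g k)^[j] n))).card :=
  term_formula_general k n l
end

section
/- If two positive integers n₁ and n₂ have the same total stopping time t in the 3n+3^k sequence (i.e., g_k^t(n₁) = 3^k = g_k^t(n₂)), then 2^{m₁}(3^{m₁}·n₁ + 3^k·S₁) = 2^{m₂}(3^{m₂}·n₂ + 3^k·S₂), where for a = 1, 2, m_a = #{i : 0 ≤ i < t and g_k^i(n_a) is odd} and S_a = Σ_{i < t, g_k^i(n_a) odd} 3^{o_i} · 2^{e_i} with o_i = #{j : i < j < t and g_k^j(n_a) is odd} and e_i = #{j : 0 ≤ j < i and g_k^j(n_a) is even}. -/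
open Finset

/-!
Each halving step divides by 2 and each odd step is `x ↦ 3x + 3^k`, so along the orbit
`2^(e t) * g_k^t(n) = 3^(m t) * n + 3^k * S t`, where `e t` and `m t` count the even and odd
steps before `t` and `S t` is the sum in the statement. If `g_k^t(n) = 3^k`, multiplying by
`2^(m t)` and using `e t + m t = t` shows that the left-hand side of the claimed identity is
`2^t * 3^k`, independently of `n`.
-/

lemma card_filter_Ioo_add_one (p : ℕ → Prop) [DecidablePred p] {i t : ℕ} (h : i < t) :
    #((Ioo i (t + 1)).filter p) = #((Ioo i t).filter p) + if p t then 1 else 0 := by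
  rw [← Order.succ_eq_add_one, Ioo_succ_right_eq_Ioc, ← Ioo_insert_right h, filter_insert]
  split_ifs <;> simp

namespace ShiftedCollatz

lemma g_of_even {k m : ℕ} (h : Even m) : g k m = m / 2 :=
  if_pos (Nat.even_iff.mp h)

lemma g_of_odd {k m : ℕ} (h : Odd m) : g k m = 3 * m + 3 ^ k :=
  if_neg (Nat.odd_iff.mp h ▸ one_ne_zero)

variable (k n : ℕ)

def oddSteps (t : ℕ) : Finset ℕ := (range t).filter fun i => Odd ((g k)^[i] n)

def evenSteps (t : ℕ) : Finset ℕ := (range t).filter fun i => Even ((g k)^[i] n)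

def oddStepsBetween (i t : ℕ) : Finset ℕ := (Ioo i t).filter fun j => Odd ((g k)^[j] n)

def oddStepSum (t : ℕ) : ℕ :=
  ∑ i ∈ oddSteps k n t, 3 ^ #(oddStepsBetween k n i t) * 2 ^ #(evenSteps k n i)

lemma card_evenSteps_add_card_oddSteps (t : ℕ) :
    #(evenSteps k n t) + #(oddSteps k n t) = t := by
  simp only [evenSteps, oddSteps, ← Nat.not_odd_iff_even]
  rw [add_comm, card_filter_add_card_filter_not, card_range]

lemma card_evenSteps_succ (t : ℕ) :
    #(evenSteps k n (t + 1)) = #(evenSteps k n t) + if Even ((g k)^[t] n) then 1 else 0 := by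
  simp only [evenSteps, card_filter, sum_range_succ]

lemma card_oddSteps_succ (t : ℕ) :
    #(oddSteps k n (t + 1)) = #(oddSteps k n t) + if Odd ((g k)^[t] n) then 1 else 0 := by
  simp only [oddSteps, card_filter, sum_range_succ]

lemma oddStepSum_succ (t : ℕ) :
    oddStepSum k n (t + 1) =
      (if Odd ((g k)^[t] n) then 3 else 1) * oddStepSum k n t +
        if Odd ((g k)^[t] n) then 2 ^ #(evenSteps k n t) else 0 := by
  have hlast : oddStepsBetween k n t (t + 1) = ∅ := by simp [oddStepsBetween]
  simp only [oddStepSum, oddSteps, sum_filter, sum_range_succ, hlast, card_empty, pow_zero,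
    one_mul, mul_sum]
  congr 1
  refine sum_congr rfl fun i hi => ?_
  rw [oddStepsBetween, card_filter_Ioo_add_one _ (mem_range.mp hi), ← oddStepsBetween]
  split_ifs <;> ring

lemma two_pow_card_evenSteps_mul_iterate (t : ℕ) :
    2 ^ #(evenSteps k n t) * (g k)^[t] n =
      3 ^ #(oddSteps k n t) * n + 3 ^ k * oddStepSum k n t := by
  induction t with
  | zero => simp [evenSteps, oddSteps, oddStepSum]
  | succ t ih =>
    rw [Function.iterate_succ_apply', card_evenSteps_succ, card_oddSteps_succ, oddStepSum_succ]
    rcases Nat.even_or_odd ((g k)^[t] n) with he | ho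
    · simp only [he, Nat.not_odd_iff_even.mpr he, g_of_even he, if_true, if_false]
      rw [pow_succ, mul_assoc, Nat.mul_div_cancel' (even_iff_two_dvd.mp he), ih]
      ring
    · simp only [ho, Nat.not_even_iff_odd.mpr ho, g_of_odd ho, if_true, if_false]
      linear_combination 3 * ih

lemma two_pow_mul_eq_of_iterate_eq {t : ℕ} (ht : (g k)^[t] n = 3 ^ k) :
    2 ^ #(oddSteps k n t) * (3 ^ #(oddSteps k n t) * n + 3 ^ k * oddStepSum k n t) =
      2 ^ t * 3 ^ k := by
  rw [← two_pow_card_evenSteps_mul_iterate, ht, ← mul_assoc, ← pow_add, add_comm,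
    card_evenSteps_add_card_oddSteps]

end ShiftedCollatz

open ShiftedCollatz in
theorem same_total_stopping_time_general (k n₁ n₂ t : ℕ)
    (ht₁ : (g k)^[t] n₁ = 3 ^ k) (ht₂ : (g k)^[t] n₂ = 3 ^ k) :
    2 ^ ((Finset.range t).filter (fun i => Odd ((g k)^[i] n₁))).card *
      (3 ^ ((Finset.range t).filter (fun i => Odd ((g k)^[i] n₁))).card * n₁ +
       3 ^ k * ∑ i ∈ (Finset.range t).filter (fun i => Odd ((g k)^[i] n₁)),
         3 ^ ((Finset.Ioo i t).filter (fun j => Odd ((g k)^[j] n₁))).card *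
         2 ^ ((Finset.range i).filter (fun j => Even ((g k)^[j] n₁))).card) =
    2 ^ ((Finset.range t).filter (fun i => Odd ((g k)^[i] n₂))).card *
      (3 ^ ((Finset.range t).filter (fun i => Odd ((g k)^[i] n₂))).card * n₂ +
       3 ^ k * ∑ i ∈ (Finset.range t).filter (fun i => Odd ((g k)^[i] n₂)),
         3 ^ ((Finset.Ioo i t).filter (fun j => Odd ((g k)^[j] n₂))).card *
         2 ^ ((Finset.range i).filter (fun j => Even ((g k)^[j] n₂))).card) :=
  (two_pow_mul_eq_of_iterate_eq k n₁ ht₁).trans (two_pow_mul_eq_of_iterate_eq k n₂ ht₂).symm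

theorem same_total_stopping_time (k n₁ n₂ t : ℕ) (hn₁ : 0 < n₁) (hn₂ : 0 < n₂)
    (ht₁ : (g k)^[t] n₁ = 3 ^ k) (ht₂ : (g k)^[t] n₂ = 3 ^ k) :
    2 ^ ((Finset.range t).filter (fun i => Odd ((g k)^[i] n₁))).card *
      (3 ^ ((Finset.range t).filter (fun i => Odd ((g k)^[i] n₁))).card * n₁ +
       3 ^ k * ∑ i ∈ (Finset.range t).filter (fun i => Odd ((g k)^[i] n₁)),
         3 ^ ((Finset.Ioo i t).filter (fun j => Odd ((g k)^[j] n₁))).card *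
         2 ^ ((Finset.range i).filter (fun j => Even ((g k)^[j] n₁))).card) =
    2 ^ ((Finset.range t).filter (fun i => Odd ((g k)^[i] n₂))).card *
      (3 ^ ((Finset.range t).filter (fun i => Odd ((g k)^[i] n₂))).card * n₂ +
       3 ^ k * ∑ i ∈ (Finset.range t).filter (fun i => Odd ((g k)^[i] n₂)),
         3 ^ ((Finset.Ioo i t).filter (fun j => Odd ((g k)^[j] n₂))).card *
         2 ^ ((Finset.range i).filter (fun j => Even ((g k)^[j] n₂))).card) :=
  same_total_stopping_time_general k n₁ n₂ t ht₁ ht₂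
end
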